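/- Let γ ∈ [0,1), let (φ_t)_{t≥0} and (ψ_t)_{t≥0} be sequences in ℝ^d with ‖ψ_t‖ ≤ M for all t, satisfying ‖φ_t + γψ_{t+1} − ψ_t‖ ≤ ε for all t. If the Cesàro averages (1/T) Σ_{t=0}^{T−1} φ_t converge to a limit L ∈ ℝ^d, then ‖L − z‖ ≤ sup_t ‖(1−γ)ψ_t − z‖ + ε for every z ∈ ℝ^d. -/

import Mathlib

/-!
Telescoping the Bellman residuals `φ t + γ ψ (t+1) - ψ t` gives
`∑_{t<T} (φ t - z) = ∑_{t<T} ((1-γ) ψ t - z) + γ (ψ 0 - ψ T) + ∑_{t<T} (residual t)`,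
so the Cesàro average of `φ` stays within `sup_t ‖(1-γ) ψ t - z‖ + ε + 2 |γ| M / T` of `z`.
The boundary term vanishes as `T → ∞`.
-/

open Finset Filter Topology

section SuccessorFeatures

variable {E : Type*}

theorem sum_range_sub_smul_eq_add_bellman [AddCommGroup E] [Module ℝ E]
    (γ : ℝ) (φ ψ : ℕ → E) (z : E) (T : ℕ) :
    ∑ t ∈ range T, φ t - (T : ℝ) • z =
      ∑ t ∈ range T, ((1 - γ) • ψ t - z) + γ • (ψ 0 - ψ T)
        + ∑ t ∈ range T, (φ t + γ • ψ (t + 1) - ψ t) := by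
  induction T with
  | zero => simp
  | succ n ih =>
    simp only [sum_range_succ, Nat.cast_succ, add_smul, one_smul]
    linear_combination (norm := module) ih

variable [NormedAddCommGroup E] [NormedSpace ℝ E] {γ ε M S : ℝ} {φ ψ : ℕ → E} {z : E}

theorem norm_sum_range_sub_smul_le (hS : ∀ t, ‖(1 - γ) • ψ t - z‖ ≤ S)
    (hM : ∀ t, ‖ψ t‖ ≤ M) (hbell : ∀ t, ‖φ t + γ • ψ (t + 1) - ψ t‖ ≤ ε) (T : ℕ) :
    ‖∑ t ∈ range T, φ t - (T : ℝ) • z‖ ≤ T * (S + ε) + 2 * ‖γ‖ * M := by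
  have hsum : ‖∑ t ∈ range T, ((1 - γ) • ψ t - z)‖ ≤ T * S := by
    simpa using norm_sum_le_of_le (range T) fun t _ => hS t
  have hres : ‖∑ t ∈ range T, (φ t + γ • ψ (t + 1) - ψ t)‖ ≤ T * ε := by
    simpa using norm_sum_le_of_le (range T) fun t _ => hbell t
  have hboundary : ‖γ • (ψ 0 - ψ T)‖ ≤ 2 * ‖γ‖ * M := by
    rw [norm_smul]
    nlinarith [norm_sub_le (ψ 0) (ψ T), hM 0, hM T, norm_nonneg γ]
  rw [sum_range_sub_smul_eq_add_bellman γ]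
  calc _ ≤ ‖∑ t ∈ range T, ((1 - γ) • ψ t - z)‖ + ‖γ • (ψ 0 - ψ T)‖
          + ‖∑ t ∈ range T, (φ t + γ • ψ (t + 1) - ψ t)‖ := norm_add₃_le
    _ ≤ _ := by linarith

theorem norm_average_sub_le (hS : ∀ t, ‖(1 - γ) • ψ t - z‖ ≤ S)
    (hM : ∀ t, ‖ψ t‖ ≤ M) (hbell : ∀ t, ‖φ t + γ • ψ (t + 1) - ψ t‖ ≤ ε)
    {T : ℕ} (hT : T ≠ 0) :
    ‖(T : ℝ)⁻¹ • ∑ t ∈ range T, φ t - z‖ ≤ S + ε + 2 * ‖γ‖ * M / T := by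
  have hTpos : (0 : ℝ) < T := by positivity
  have hrw : (T : ℝ)⁻¹ • ∑ t ∈ range T, φ t - z =
      (T : ℝ)⁻¹ • (∑ t ∈ range T, φ t - (T : ℝ) • z) := by
    rw [smul_sub, inv_smul_smul₀ hTpos.ne']
  rw [hrw, norm_smul, norm_inv, Real.norm_natCast, inv_mul_le_iff₀ hTpos]
  calc _ ≤ T * (S + ε) + 2 * ‖γ‖ * M := norm_sum_range_sub_smul_le hS hM hbell T
    _ = T * (S + ε + 2 * ‖γ‖ * M / T) := by field_simp

theorem norm_cesaro_limit_sub_le (hS : ∀ t, ‖(1 - γ) • ψ t - z‖ ≤ S)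
    (hM : ∀ t, ‖ψ t‖ ≤ M) (hbell : ∀ t, ‖φ t + γ • ψ (t + 1) - ψ t‖ ≤ ε) {L : E}
    (hL : Tendsto (fun T : ℕ => (T : ℝ)⁻¹ • ∑ t ∈ range T, φ t) atTop (𝓝 L)) :
    ‖L - z‖ ≤ S + ε := by
  have hbound : Tendsto (fun T : ℕ => S + ε + 2 * ‖γ‖ * M / T) atTop (𝓝 (S + ε)) := by
    simpa using tendsto_const_nhds.add (tendsto_const_div_atTop_nhds_zero_nat (2 * ‖γ‖ * M))
  refine le_of_tendsto_of_tendsto (hL.sub_const z).norm hbound ?_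
  filter_upwards [eventually_ne_atTop 0] with T hT
  exact norm_average_sub_le hS hM hbell hT

theorem bddAbove_range_norm_smul_sub (c : ℝ) (hM : ∀ t, ‖ψ t‖ ≤ M) (z : E) :
    BddAbove (Set.range fun t => ‖c • ψ t - z‖) := by
  refine ⟨‖c‖ * M + ‖z‖, ?_⟩
  rintro _ ⟨t, rfl⟩
  calc ‖c • ψ t - z‖ ≤ ‖c • ψ t‖ + ‖z‖ := norm_sub_le _ _
    _ ≤ ‖c‖ * M + ‖z‖ := by rw [norm_smul]; gcongr; exact hM t

end SuccessorFeatures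

theorem stmt_11_general (d : ℕ) (γ ε M : ℝ)
    (φ ψ : ℕ → EuclideanSpace ℝ (Fin d))
    (hM : ∀ t, ‖ψ t‖ ≤ M)
    (hbell : ∀ t, ‖φ t + γ • ψ (t + 1) - ψ t‖ ≤ ε)
    (L : EuclideanSpace ℝ (Fin d))
    (hL : Filter.Tendsto (fun T : ℕ => (T : ℝ)⁻¹ • (∑ t ∈ Finset.range T, φ t))
      Filter.atTop (nhds L)) :
    ∀ z : EuclideanSpace ℝ (Fin d),
      ‖L - z‖ ≤ (⨆ t : ℕ, ‖(1 - γ) • ψ t - z‖) + ε := fun z =>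
  norm_cesaro_limit_sub_le (fun t => le_ciSup (bddAbove_range_norm_smul_sub (1 - γ) hM z) t)
    hM hbell hL

theorem stmt_11 (d : ℕ) (γ ε M : ℝ) (hγ0 : 0 ≤ γ) (hγ1 : γ < 1) (hε : 0 ≤ ε)
    (φ ψ : ℕ → EuclideanSpace ℝ (Fin d))
    (hM : ∀ t, ‖ψ t‖ ≤ M)
    (hbell : ∀ t, ‖φ t + γ • ψ (t + 1) - ψ t‖ ≤ ε)
    (L : EuclideanSpace ℝ (Fin d))
    (hL : Filter.Tendsto (fun T : ℕ => (T : ℝ)⁻¹ • (∑ t ∈ Finset.range T, φ t))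
      Filter.atTop (nhds L)) :
    ∀ z : EuclideanSpace ℝ (Fin d),
      ‖L - z‖ ≤ (⨆ t : ℕ, ‖(1 - γ) • ψ t - z‖) + ε :=
  stmt_11_general d γ ε M φ ψ hM hbell L hL
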